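/- Let n ≥ 1 and let S be a nonempty subset of 𝔽_2^{2n} \ {0}. If y ∈ ℝ^S satisfies Σ_{a ∈ S} (−1)^{⟨a,b⟩} y_a ≤ 1 for every b ∈ 𝔽_2^{2n}, then |y_a| ≤ 1 for every a ∈ S. -/

import Mathlib

/-- Binary symplectic vectors: `𝔽_2^{2n}` presented as pairs `(a_x, a_z)` of
vectors in `𝔽_2^n`. -/
abbrev BV (n : ℕ) := (Fin n → ZMod 2) × (Fin n → ZMod 2)

/-- The binary symplectic form `⟨a,b⟩ = a_x · b_z + a_z · b_x` (mod 2). -/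
def symp {n : ℕ} (a b : BV n) : ZMod 2 :=
  (∑ i, a.1 i * b.2 i) + (∑ i, a.2 i * b.1 i)

/-- The real sign `(−1)^{⟨a,b⟩} ∈ {−1, 1} ⊆ ℝ`. -/
noncomputable def wsgn {n : ℕ} (a b : BV n) : ℝ := (-1 : ℝ) ^ (symp a b).val

lemma neg_one_pow_val_add (x y : ZMod 2) :
    (-1 : ℝ) ^ (x + y).val = (-1 : ℝ) ^ x.val * (-1 : ℝ) ^ y.val := by
  rcases (by decide : ∀ z : ZMod 2, z = 0 ∨ z = 1) x with rfl | rfl <;>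
  rcases (by decide : ∀ z : ZMod 2, z = 0 ∨ z = 1) y with rfl | rfl <;>
    norm_num [show ((2 : ZMod 2)).val = 0 from rfl, show ((1 : ZMod 2)).val = 1 from rfl,
      show ((0 : ZMod 2)).val = 0 from rfl]

lemma symp_add_left {n : ℕ} (a a' b : BV n) :
    symp (a + a') b = symp a b + symp a' b := by
  simp only [symp, Prod.fst_add, Prod.snd_add, Pi.add_apply, add_mul,
    Finset.sum_add_distrib]
  ring

lemma symp_add_right {n : ℕ} (a b b' : BV n) :
    symp a (b + b') = symp a b + symp a b' := by
  simp only [symp, Prod.fst_add, Prod.snd_add, Pi.add_apply, mul_add,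
    Finset.sum_add_distrib]
  ring

lemma wsgn_add_left {n : ℕ} (a a' b : BV n) :
    wsgn (a + a') b = wsgn a b * wsgn a' b := by
  rw [wsgn, symp_add_left, neg_one_pow_val_add]; rfl

lemma wsgn_zero {n : ℕ} (b : BV n) : wsgn 0 b = 1 := by
  simp [wsgn, symp]

lemma wsgn_pm {n : ℕ} (a b : BV n) : wsgn a b = 1 ∨ wsgn a b = -1 := by
  rcases Nat.even_or_odd (symp a b).val with h | h
  · exact Or.inl (h.neg_one_pow)
  · exact Or.inr (h.neg_one_pow)

lemma zmod2_eq_one {x : ZMod 2} (h : x ≠ 0) : x = 1 := by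
  fin_cases x
  · exact absurd rfl h
  · rfl

lemma exists_symp_one {n : ℕ} {a : BV n} (ha : a ≠ 0) : ∃ c : BV n, symp a c = 1 := by
  have h : (∃ i, a.1 i ≠ 0) ∨ (∃ i, a.2 i ≠ 0) := by
    by_contra h
    push_neg at h
    apply ha
    ext i
    · exact h.1 i
    · exact h.2 i
  rcases h with ⟨i, hi⟩ | ⟨i, hi⟩
  · refine ⟨(0, fun j => if j = i then 1 else 0), ?_⟩
    simp [symp, mul_ite, Finset.sum_ite_eq', zmod2_eq_one hi]
  · refine ⟨(fun j => if j = i then 1 else 0, 0), ?_⟩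
    simp [symp, mul_ite, Finset.sum_ite_eq', zmod2_eq_one hi]

lemma sum_wsgn {n : ℕ} {a : BV n} (ha : a ≠ 0) : ∑ b : BV n, wsgn a b = 0 := by
  obtain ⟨c, hc⟩ := exists_symp_one ha
  have h1 : ∑ b : BV n, wsgn a (b + c) = ∑ b : BV n, wsgn a b :=
    Fintype.sum_equiv (Equiv.addRight c) _ _ (fun b => rfl)
  have h2 : ∀ b : BV n, wsgn a (b + c) = - wsgn a b := by
    intro b
    have h3 : wsgn a (b + c) = wsgn a b * wsgn a c := by
      rw [wsgn, symp_add_right, neg_one_pow_val_add]; rfl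
    have hc' : wsgn a c = -1 := by
      rw [wsgn, hc]; norm_num [show ((1 : ZMod 2)).val = 1 from rfl]
    rw [h3, hc', mul_neg_one]
  simp_rw [h2] at h1
  rw [Finset.sum_neg_distrib] at h1
  linarith

/-- dual feasibility implies `|y_a| ≤ 1` for every `a ∈ S`. -/
theorem stmt_5 (n : ℕ) (hn : 1 ≤ n) (S : Finset (BV n)) (hS : S.Nonempty)
    (h0 : (0 : BV n) ∉ S)
    (y : BV n → ℝ) (hy : ∀ b : BV n, ∑ a ∈ S, wsgn a b * y a ≤ 1) :
    ∀ a ∈ S, |y a| ≤ 1 := by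
  intro a₀ ha₀
  set N : ℝ := (Fintype.card (BV n) : ℝ) with hNdef
  have hN : 0 < N := by
    have := Fintype.card_pos (α := BV n)
    exact hNdef ▸ Nat.cast_pos.mpr this
  have hSne : ∀ a ∈ S, a ≠ 0 := by
    intro a ha h
    exact h0 (h ▸ ha)
  -- total sum of wsgn a₀ over b is 0
  have ha₀sum : ∑ b : BV n, wsgn a₀ b = 0 := sum_wsgn (hSne a₀ ha₀)
  -- L = 0
  have hL : ∑ b : BV n, ∑ a ∈ S, wsgn a b * y a = 0 := by
    rw [Finset.sum_comm]
    refine Finset.sum_eq_zero fun a ha => ?_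
    rw [← Finset.sum_mul, sum_wsgn (hSne a ha), zero_mul]
  -- K = N * y a₀
  have hK : ∑ b : BV n, wsgn a₀ b * ∑ a ∈ S, wsgn a b * y a = N * y a₀ := by
    have hstep : ∀ b : BV n, wsgn a₀ b * ∑ a ∈ S, wsgn a b * y a
        = ∑ a ∈ S, wsgn (a₀ + a) b * y a := by
      intro b
      rw [Finset.mul_sum]
      refine Finset.sum_congr rfl fun a _ => ?_
      rw [wsgn_add_left]; ring
    simp_rw [hstep]
    rw [Finset.sum_comm]
    rw [Finset.sum_eq_single a₀]
    · have : a₀ + a₀ = (0 : BV n) := by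
        ext i <;> simp [CharTwo.add_self_eq_zero]
      simp [this, wsgn_zero, hNdef, mul_comm]
    · intro a ha hne
      have hne0 : a₀ + a ≠ 0 := by
        intro h
        apply hne
        have h2 : a₀ + a₀ = (0 : BV n) := by
          ext i <;> simp [CharTwo.add_self_eq_zero]
        exact add_left_cancel (h.trans h2.symm)
      rw [← Finset.sum_mul, sum_wsgn hne0, zero_mul]
    · intro h
      exact absurd ha₀ h
  -- pointwise nonnegativity
  have hpos : ∀ b : BV n, 0 ≤ 1 + wsgn a₀ b := by
    intro b
    rcases wsgn_pm a₀ b with h | h <;> rw [h] <;> norm_num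
  have hneg : ∀ b : BV n, 0 ≤ 1 - wsgn a₀ b := by
    intro b
    rcases wsgn_pm a₀ b with h | h <;> rw [h] <;> norm_num
  -- upper bound: y a₀ ≤ 1
  have hub : ∑ b : BV n, (1 + wsgn a₀ b) * (∑ a ∈ S, wsgn a b * y a)
      ≤ ∑ b : BV n, (1 + wsgn a₀ b) := by
    refine Finset.sum_le_sum fun b _ => ?_
    calc (1 + wsgn a₀ b) * (∑ a ∈ S, wsgn a b * y a)
        ≤ (1 + wsgn a₀ b) * 1 := mul_le_mul_of_nonneg_left (hy b) (hpos b)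
      _ = 1 + wsgn a₀ b := mul_one _
  have hub' : N * y a₀ ≤ N := by
    have e1 : ∑ b : BV n, (1 + wsgn a₀ b) * (∑ a ∈ S, wsgn a b * y a)
        = N * y a₀ := by
      simp_rw [add_mul, one_mul, Finset.sum_add_distrib, hL, hK, zero_add]
    have e2 : ∑ b : BV n, (1 + wsgn a₀ b) = N := by
      rw [Finset.sum_add_distrib, ha₀sum, add_zero, Finset.sum_const, nsmul_eq_mul,
        mul_one, hNdef, Finset.card_univ]
    rw [e1, e2] at hub
    exact hub
  -- lower bound: -1 ≤ y a₀
  have hlb : ∑ b : BV n, (1 - wsgn a₀ b) * (∑ a ∈ S, wsgn a b * y a)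
      ≤ ∑ b : BV n, (1 - wsgn a₀ b) := by
    refine Finset.sum_le_sum fun b _ => ?_
    calc (1 - wsgn a₀ b) * (∑ a ∈ S, wsgn a b * y a)
        ≤ (1 - wsgn a₀ b) * 1 := mul_le_mul_of_nonneg_left (hy b) (hneg b)
      _ = 1 - wsgn a₀ b := mul_one _
  have hlb' : -(N * y a₀) ≤ N := by
    have e1 : ∑ b : BV n, (1 - wsgn a₀ b) * (∑ a ∈ S, wsgn a b * y a)
        = -(N * y a₀) := by
      simp_rw [sub_mul, one_mul, Finset.sum_sub_distrib, hL, hK, zero_sub]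
    have e2 : ∑ b : BV n, (1 - wsgn a₀ b) = N := by
      rw [Finset.sum_sub_distrib, ha₀sum, sub_zero, Finset.sum_const, nsmul_eq_mul,
        mul_one, hNdef, Finset.card_univ]
    rw [e1, e2] at hlb
    exact hlb
  rw [abs_le]
  constructor <;> nlinarith
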